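/- The difference (number of positive L'-tableaux with parameters (g,d,k)) − (number of negative L'-tableaux with parameters (g,d,k)) equals the number of positive L'-tableaux whose bottom row contains no blue 1; in particular this difference is nonnegative. -/
import Mathlib


/-- A cell of an L'-tableau: red with a value, blue with a value, or gray. -/
inductive LpCell : Type where
  | red (v : ℕ) : LpCell
  | blue (v : ℕ) : LpCell
  | gray : LpCell
deriving DecidableEq

/-- A positive L'-tableau with parameters (g,d,k): a filling of the 2×(d−1) grid
with a standard Young tableau of size g in the lower-left corner (red), the k−1
rightmost boxes of the top row gray, and a {0,1} semistandard skew filling of the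
remaining boxes (blue). Row 0 is the bottom row. -/
structure PosLpTableau (g d k : ℕ) where
  entry : Fin 2 → Fin (d-1) → LpCell
  gray_iff : ∀ (i : Fin 2) (j : Fin (d-1)),
    entry i j = LpCell.gray ↔ (i = 1 ∧ (d-1) - (k-1) ≤ (j : ℕ))
  red_left : ∀ (i : Fin 2) (j j' : Fin (d-1)) (v : ℕ),
    entry i j = LpCell.red v → j' ≤ j → ∃ w, entry i j' = LpCell.red w
  red_down : ∀ (i i' : Fin 2) (j : Fin (d-1)) (v : ℕ),
    entry i j = LpCell.red v → i' ≤ i → ∃ w, entry i' j = LpCell.red w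
  red_vals : ∀ (i : Fin 2) (j : Fin (d-1)) (v : ℕ), entry i j = LpCell.red v → 1 ≤ v ∧ v ≤ g
  red_content : ∀ v : ℕ, 1 ≤ v → v ≤ g → ∃! p : Fin 2 × Fin (d-1), entry p.1 p.2 = LpCell.red v
  red_row : ∀ (i : Fin 2) (j j' : Fin (d-1)) (a b : ℕ),
    entry i j = LpCell.red a → entry i j' = LpCell.red b → j < j' → a < b
  red_col : ∀ (i i' : Fin 2) (j : Fin (d-1)) (a b : ℕ),
    entry i j = LpCell.red a → entry i' j = LpCell.red b → i < i' → a < b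
  blue_vals : ∀ (i : Fin 2) (j : Fin (d-1)) (v : ℕ), entry i j = LpCell.blue v → v ≤ 1
  blue_row : ∀ (i : Fin 2) (j j' : Fin (d-1)) (a b : ℕ),
    entry i j = LpCell.blue a → entry i j' = LpCell.blue b → j < j' → a ≤ b
  blue_col : ∀ (i i' : Fin 2) (j : Fin (d-1)) (a b : ℕ),
    entry i j = LpCell.blue a → entry i' j = LpCell.blue b → i < i' → a < b

/-- A negative L'-tableau with parameters (g,d,k): the same data on a 2×(d−2) grid
with k−2 gray boxes at the right of the top row. -/
def NegLpTableau (g d k : ℕ) : Type := PosLpTableau g (d-1) (k-1)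

namespace LpProofAux
variable {g d k : ℕ}

theorem pos_ext {T T' : PosLpTableau g d k} (h : T.entry = T'.entry) : T = T' := by
  cases T; cases T'; simpa using h

def encCell (g : ℕ) : LpCell → Option (Bool × Fin (g+2))
  | LpCell.red v => some (true, ⟨min v (g+1), by omega⟩)
  | LpCell.blue v => some (false, ⟨min v (g+1), by omega⟩)
  | LpCell.gray => none

instance : Finite (PosLpTableau g d k) := by
  apply Finite.of_injective (fun T (i : Fin 2) (j : Fin (d-1)) => encCell g (T.entry i j))
  intro T T' h
  apply pos_ext
  funext i j
  have hj : encCell g (T.entry i j) = encCell g (T'.entry i j) := congrFun (congrFun h i) j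
  rcases hT : T.entry i j with v | v | _ <;> rcases hT' : T'.entry i j with w | w | _ <;>
      rw [hT, hT'] at hj <;> simp [encCell, Fin.ext_iff] at hj ⊢
  · have h1 := T.red_vals i j v hT
    have h2 := T'.red_vals i j w hT'
    omega
  · have h1 := T.blue_vals i j v hT
    have h2 := T'.blue_vals i j w hT'
    omega


/-- If some bottom cell is blue 1, then the last bottom cell is blue 1. -/
theorem last_blue (hd : 2 ≤ d) (T : PosLpTableau g d k) (j : Fin (d-1))
    (hj : T.entry 0 j = LpCell.blue 1) :
    T.entry 0 ⟨d-2, by omega⟩ = LpCell.blue 1 := by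
  set jl : Fin (d-1) := ⟨d-2, by omega⟩ with hjl
  have hle : j ≤ jl := by
    rw [Fin.le_def]; simp [hjl]; omega
  rcases hT : T.entry 0 jl with v | v | _
  · obtain ⟨w, hw⟩ := T.red_left 0 jl j v hT hle
    rw [hj] at hw; exact absurd hw (by simp)
  · have hv := T.blue_vals 0 jl v hT
    rcases lt_or_eq_of_le hle with hlt | heq
    · have := T.blue_row 0 j jl 1 v hj hT hlt
      have hv1 : v = 1 := by omega
      rw [hv1]
    · rw [heq] at hj
      injection hT.symm.trans hj with h
      rw [h]
  · have := (T.gray_iff 0 jl).mp hT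
    simp at this

theorem not_blue_iff (hd : 2 ≤ d) (T : PosLpTableau g d k) :
    (∀ j : Fin (d-1), T.entry 0 j ≠ LpCell.blue 1) ↔
      T.entry 0 ⟨d-2, by omega⟩ ≠ LpCell.blue 1 := by
  constructor
  · intro h; exact h _
  · intro h j hj; exact h (last_blue hd T j hj)



theorem fin2_eq (i : Fin 2) : i = 0 ∨ i = 1 := by revert i; decide

def extEnt (N : PosLpTableau g (d-1) (k-1)) (i : Fin 2) (j : Fin (d-1)) : LpCell :=
  if h : (j : ℕ) < d - 1 - 1 then N.entry i ⟨j, h⟩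
  else if i = 0 then LpCell.blue 1 else LpCell.gray

theorem extEnt_not_red {N : PosLpTableau g (d-1) (k-1)} {i : Fin 2} {j : Fin (d-1)} {v : ℕ}
    (hv : extEnt N i j = LpCell.red v) : (j : ℕ) < d - 1 - 1 := by
  by_contra h
  rw [extEnt, dif_neg h] at hv
  rcases fin2_eq i with hi | hi <;> simp [hi] at hv

/-- Extend a negative tableau by a rightmost column (bottom blue 1, top gray). -/
def ext1 (hk : 2 ≤ k) (hkd : k ≤ d) (N : PosLpTableau g (d-1) (k-1)) :
    PosLpTableau g d k where
  entry := extEnt N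
  gray_iff := by
    intro i j
    by_cases h : (j : ℕ) < d - 1 - 1
    · rw [extEnt, dif_pos h, N.gray_iff i ⟨j, h⟩]
      constructor
      · rintro ⟨hi, hle⟩; exact ⟨hi, by simp at hle ⊢; omega⟩
      · rintro ⟨hi, hle⟩; exact ⟨hi, by simp at hle ⊢; omega⟩
    · rw [extEnt, dif_neg h]
      have hj : (j : ℕ) = d - 2 := by have := j.isLt; omega
      rcases fin2_eq i with hi | hi
      · simp [hi]
      · simp [hi]
        omega
  red_left := by
    intro i j j' v hv hle
    have hjlt := extEnt_not_red hv
    rw [extEnt, dif_pos hjlt] at hv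
    have hj'lt : (j' : ℕ) < d - 1 - 1 := lt_of_le_of_lt hle hjlt
    obtain ⟨w, hw⟩ := N.red_left i ⟨j, hjlt⟩ ⟨j', hj'lt⟩ v hv hle
    exact ⟨w, by rw [extEnt, dif_pos hj'lt]; exact hw⟩
  red_down := by
    intro i i' j v hv hle
    have hjlt := extEnt_not_red hv
    rw [extEnt, dif_pos hjlt] at hv
    obtain ⟨w, hw⟩ := N.red_down i i' ⟨j, hjlt⟩ v hv hle
    exact ⟨w, by rw [extEnt, dif_pos hjlt]; exact hw⟩
  red_vals := by
    intro i j v hv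
    have hjlt := extEnt_not_red hv
    rw [extEnt, dif_pos hjlt] at hv
    exact N.red_vals i ⟨j, hjlt⟩ v hv
  red_content := by
    intro v h1 h2
    obtain ⟨⟨pi, pj⟩, hp, hu⟩ := N.red_content v h1 h2
    have hd2 : 2 ≤ d := le_trans hk hkd
    refine ⟨(pi, ⟨pj, by have := pj.isLt; omega⟩), ?_, ?_⟩
    · simp only
      rw [extEnt, dif_pos (show ((⟨(pj : ℕ), by have := pj.isLt; omega⟩ : Fin (d-1)) : ℕ) < d - 1 - 1 from pj.isLt)]
      exact hp
    · rintro ⟨qi, qj⟩ hq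
      simp only at hq
      have hjlt : (qj : ℕ) < d - 1 - 1 := extEnt_not_red hq
      rw [extEnt, dif_pos hjlt] at hq
      have heq := hu (qi, ⟨qj, hjlt⟩) hq
      have e1 : qi = pi := congrArg Prod.fst heq
      have e2 : ((⟨(qj:ℕ), hjlt⟩ : Fin (d-1-1)) : ℕ) = (pj : ℕ) :=
        congrArg Fin.val (congrArg Prod.snd heq)
      simp only [Prod.ext_iff]
      exact ⟨e1, Fin.ext e2⟩
  red_row := by
    intro i j j' a b ha hb hlt
    have hjlt := extEnt_not_red ha
    have hj'lt := extEnt_not_red hb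
    rw [extEnt, dif_pos hjlt] at ha; rw [extEnt, dif_pos hj'lt] at hb
    exact N.red_row i ⟨j, hjlt⟩ ⟨j', hj'lt⟩ a b ha hb hlt
  red_col := by
    intro i i' j a b ha hb hlt
    have hjlt := extEnt_not_red ha
    rw [extEnt, dif_pos hjlt] at ha; rw [extEnt, dif_pos hjlt] at hb
    exact N.red_col i i' ⟨j, hjlt⟩ a b ha hb hlt
  blue_vals := by
    intro i j v hv
    by_cases h : (j : ℕ) < d - 1 - 1
    · rw [extEnt, dif_pos h] at hv; exact N.blue_vals i ⟨j, h⟩ v hv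
    · rw [extEnt, dif_neg h] at hv
      rcases fin2_eq i with hi | hi <;> simp [hi] at hv <;> omega
  blue_row := by
    intro i j j' a b ha hb hlt
    by_cases h' : (j' : ℕ) < d - 1 - 1
    · have h : (j : ℕ) < d - 1 - 1 := lt_trans hlt h'
      rw [extEnt, dif_pos h] at ha; rw [extEnt, dif_pos h'] at hb
      exact N.blue_row i ⟨j, h⟩ ⟨j', h'⟩ a b ha hb hlt
    · rw [extEnt, dif_neg h'] at hb
      rcases fin2_eq i with hi | hi
      · simp [hi] at hb
        have h : (j : ℕ) < d - 1 - 1 := by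
          by_contra hc
          have h1 := j.isLt; have h2 := j'.isLt
          have : (j : ℕ) = (j' : ℕ) := by omega
          exact absurd (Fin.ext this) (ne_of_lt hlt)
        rw [extEnt, dif_pos h] at ha
        have := N.blue_vals i ⟨j, h⟩ a ha
        omega
      · simp [hi] at hb
  blue_col := by
    intro i i' j a b ha hb hlt
    by_cases h : (j : ℕ) < d - 1 - 1
    · rw [extEnt, dif_pos h] at ha; rw [extEnt, dif_pos h] at hb
      exact N.blue_col i i' ⟨j, h⟩ a b ha hb hlt
    · rw [extEnt, dif_neg h] at hb
      have hi' : i' = 1 := by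
        rcases fin2_eq i' with hi' | hi'
        · exact absurd (lt_of_lt_of_le hlt (le_of_eq hi')) (by simp [Fin.lt_def])
        · exact hi'
      simp [hi', show (1 : Fin 2) ≠ 0 by decide] at hb

theorem ext1_last (hk : 2 ≤ k) (hkd : k ≤ d) (N : PosLpTableau g (d-1) (k-1)) :
    (ext1 hk hkd N).entry 0 ⟨d-2, by omega⟩ = LpCell.blue 1 := by
  have hd2 : 2 ≤ d := le_trans hk hkd
  show extEnt N 0 ⟨d-2, by omega⟩ = LpCell.blue 1
  rw [extEnt, dif_neg (by simp; omega)]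
  simp

/-- Restrict a positive tableau (whose last bottom cell is blue 1) to a negative one. -/
def restr (hk : 2 ≤ k) (hkd : k ≤ d) (T : PosLpTableau g d k)
    (hlast : T.entry 0 ⟨d-2, by omega⟩ = LpCell.blue 1) : PosLpTableau g (d-1) (k-1) where
  entry i j := T.entry i ⟨j, by have := j.isLt; omega⟩
  gray_iff := by
    intro i j
    rw [T.gray_iff i ⟨j, by have := j.isLt; omega⟩]
    constructor
    · rintro ⟨hi, hle⟩
      refine ⟨hi, ?_⟩
      have hle' : d - 1 - (k - 1) ≤ (j : ℕ) := hle
      omega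
    · rintro ⟨hi, hle⟩
      refine ⟨hi, ?_⟩
      show d - 1 - (k - 1) ≤ (j : ℕ)
      omega
  red_left := by
    intro i j j' v hv hle
    exact T.red_left i _ _ v hv hle
  red_down := by
    intro i i' j v hv hle
    exact T.red_down i i' _ v hv hle
  red_vals := by
    intro i j v hv
    exact T.red_vals i _ v hv
  red_content := by
    intro v h1 h2
    obtain ⟨⟨pi, pj⟩, hp, hu⟩ := T.red_content v h1 h2
    simp only at hp
    have hpj : (pj : ℕ) < d - 1 - 1 := by
      by_contra hc
      have hpj2 : pj = (⟨d-2, by omega⟩ : Fin (d-1)) :=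
        Fin.ext (by show (pj : ℕ) = d - 2; have := pj.isLt; omega)
      rcases fin2_eq pi with hi | hi
      · rw [hi, hpj2, hlast] at hp
        exact absurd hp (by simp)
      · have hg : T.entry pi pj = LpCell.gray :=
          (T.gray_iff pi pj).mpr ⟨hi, by have := pj.isLt; omega⟩
        rw [hg] at hp
        exact absurd hp (by simp)
    refine ⟨(pi, ⟨(pj : ℕ), hpj⟩), ?_, ?_⟩
    · simp only
      have : (⟨((⟨(pj : ℕ), hpj⟩ : Fin (d-1-1)) : ℕ), by omega⟩ : Fin (d-1)) = pj := Fin.ext rfl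
      rw [this]
      exact hp
    · rintro ⟨qi, qj⟩ hq
      simp only at hq
      have heq := hu (qi, ⟨qj, by have := qj.isLt; omega⟩) hq
      have e1 : qi = pi := congrArg Prod.fst heq
      have e2 : (qj : ℕ) = (pj : ℕ) := congrArg (fun p => ((Prod.snd p : Fin (d-1)) : ℕ)) heq
      simp only [Prod.ext_iff]
      exact ⟨e1, Fin.ext e2⟩
  red_row := by
    intro i j j' a b ha hb hlt
    exact T.red_row i _ _ a b ha hb hlt
  red_col := by
    intro i i' j a b ha hb hlt
    exact T.red_col i i' _ a b ha hb hlt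
  blue_vals := by
    intro i j v hv
    exact T.blue_vals i _ v hv
  blue_row := by
    intro i j j' a b ha hb hlt
    exact T.blue_row i _ _ a b ha hb hlt
  blue_col := by
    intro i i' j a b ha hb hlt
    exact T.blue_col i i' _ a b ha hb hlt

theorem ext1_restr (hk : 2 ≤ k) (hkd : k ≤ d) (T : PosLpTableau g d k)
    (hlast : T.entry 0 ⟨d-2, by omega⟩ = LpCell.blue 1) :
    ext1 hk hkd (restr hk hkd T hlast) = T := by
  have hd2 : 2 ≤ d := le_trans hk hkd
  apply pos_ext
  funext i j
  show extEnt (restr hk hkd T hlast) i j = T.entry i j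
  rw [extEnt]
  by_cases h : (j : ℕ) < d - 1 - 1
  · rw [dif_pos h]
    rfl
  · rw [dif_neg h]
    have hj : j = (⟨d-2, by omega⟩ : Fin (d-1)) :=
      Fin.ext (by show (j : ℕ) = d - 2; have := j.isLt; omega)
    rcases fin2_eq i with hi | hi
    · rw [hi, hj, hlast]
      exact if_pos rfl
    · rw [hi, hj]
      have hg : T.entry 1 ⟨d-2, by omega⟩ = LpCell.gray :=
        (T.gray_iff 1 _).mpr ⟨rfl, by show d - 1 - (k - 1) ≤ d - 2; omega⟩
      rw [hg]
      exact if_neg (by decide)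

theorem restr_ext1 (hk : 2 ≤ k) (hkd : k ≤ d) (N : PosLpTableau g (d-1) (k-1)) :
    restr hk hkd (ext1 hk hkd N) (ext1_last hk hkd N) = N := by
  apply pos_ext
  funext i j
  show extEnt N i ⟨j, _⟩ = N.entry i j
  rw [extEnt, dif_pos (show ((⟨(j : ℕ), by have := j.isLt; omega⟩ : Fin (d-1)) : ℕ) < d - 1 - 1 from j.isLt)]

/-- The key equivalence. -/
def theEquiv (hk : 2 ≤ k) (hkd : k ≤ d) :
    PosLpTableau g (d-1) (k-1) ≃
      {T : PosLpTableau g d k // T.entry 0 ⟨d-2, by omega⟩ = LpCell.blue 1} where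
  toFun N := ⟨ext1 hk hkd N, ext1_last hk hkd N⟩
  invFun T := restr hk hkd T.1 T.2
  left_inv N := restr_ext1 hk hkd N
  right_inv T := Subtype.ext (ext1_restr hk hkd T.1 T.2)

end LpProofAux

/-- The number of positive L'-tableaux minus the number of negative L'-tableaux
(with parameters (g,d,k)) equals the number of positive L'-tableaux whose bottom
row contains no blue 1; in particular the difference is nonnegative. -/
theorem stmt_14 (g d k : ℕ) (hk : 2 ≤ k) (hkd : k ≤ d) :
    Nat.card (NegLpTableau g d k) ≤ Nat.card (PosLpTableau g d k) ∧
      Nat.card (PosLpTableau g d k) - Nat.card (NegLpTableau g d k) =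
        Nat.card {T : PosLpTableau g d k //
          ∀ j : Fin (d - 1), T.entry 0 j ≠ LpCell.blue 1} := by
  classical
  have hd2 : 2 ≤ d := le_trans hk hkd
  haveI : Finite (NegLpTableau g d k) :=
    inferInstanceAs (Finite (PosLpTableau g (d-1) (k-1)))
  have hcard1 : Nat.card (NegLpTableau g d k) =
      Nat.card {T : PosLpTableau g d k //
        T.entry 0 ⟨d-2, by omega⟩ = LpCell.blue 1} :=
    Nat.card_congr (LpProofAux.theEquiv hk hkd)
  have e2 : {T : PosLpTableau g d k // ∀ j : Fin (d-1), T.entry 0 j ≠ LpCell.blue 1} ≃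
      {T : PosLpTableau g d k // ¬ (T.entry 0 ⟨d-2, by omega⟩ = LpCell.blue 1)} :=
    Equiv.subtypeEquivRight (fun T => LpProofAux.not_blue_iff hd2 T)
  haveI := Fintype.ofFinite (PosLpTableau g d k)
  rw [hcard1, Nat.card_congr e2]
  rw [Nat.card_eq_fintype_card, Nat.card_eq_fintype_card, Nat.card_eq_fintype_card]
  exact ⟨Fintype.card_subtype_le _, (Fintype.card_subtype_compl _).symm⟩
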